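/- Let n ≥ 2, let H_1, …, H_p be Hermitian U(1)-invariant complex matrices each of which is 2-local (a finite sum of matrices each supported on some subset of Fin n of size at most 2), and set V := Matrix.exp(-i·H_1)·…·Matrix.exp(-i·H_p). Then Δ3(V) ≡ 0 (mod 2π). -/

import Mathlib

open Finset Matrix

noncomputable section

/-- Hamming weight of a basis label. -/
def hw {n : ℕ} (z : Fin n → Bool) : ℕ := (Finset.univ.filter fun i => z i = true).card

/-- A matrix is U(1)-invariant if it vanishes off the Hamming-weight blocks. -/
def U1Invariant {n : ℕ} (M : Matrix (Fin n → Bool) (Fin n → Bool) ℂ) : Prop :=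
  ∀ z z', hw z ≠ hw z' → M z z' = 0

/-- The weight-`m` block `M_m` of a matrix `M`. -/
def block {n : ℕ} (M : Matrix (Fin n → Bool) (Fin n → Bool) ℂ) (m : ℕ) :
    Matrix {z : Fin n → Bool // hw z = m} {z : Fin n → Bool // hw z = m} ℂ :=
  fun a b => M a.1 b.1

/-- The phase `θ_m(V) = arg det(V_m)`. -/
def theta {n : ℕ} (V : Matrix (Fin n → Bool) (Fin n → Bool) ℂ) (m : ℕ) : ℝ :=
  Complex.arg (Matrix.det (block V m))

/-- The phase `Δ3(V) = θ_{n-1} - θ_1 - (n-2)(θ_n - θ_0)`. -/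
def Delta3 {n : ℕ} (V : Matrix (Fin n → Bool) (Fin n → Bool) ℂ) : ℝ :=
  theta V (n-1) - theta V 1 - ((n : ℝ) - 2) * (theta V n - theta V 0)

/-- `x ≡ y (mod 2π)`. -/
def Mod2Pi (x y : ℝ) : Prop := ∃ j : ℤ, x - y = 2 * Real.pi * j

/-- A matrix `M` is supported on `S ⊆ Fin n` if it acts only on the qubits in `S`. -/
def SupportedOn {n : ℕ} (S : Finset (Fin n)) (M : Matrix (Fin n → Bool) (Fin n → Bool) ℂ) : Prop :=
  ∃ f : ({ i // i ∈ S } → Bool) → ({ i // i ∈ S } → Bool) → ℂ,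
    ∀ z z' : Fin n → Bool,
      M z z' = if ∀ i ∉ S, z i = z' i then f (fun i => z i.1) (fun i => z' i.1) else 0

/-- A matrix is `k`-local if it is a finite sum of matrices each supported on a
subset of size at most `k`. -/
def KLocal {n : ℕ} (k : ℕ) (M : Matrix (Fin n → Bool) (Fin n → Bool) ℂ) : Prop :=
  ∃ (p : ℕ) (g : Fin p → Matrix (Fin n → Bool) (Fin n → Bool) ℂ) (S : Fin p → Finset (Fin n)),
    (∀ i, (S i).card ≤ k ∧ SupportedOn (S i) (g i)) ∧ M = ∑ i, g i

/-!
Every factor `exp(-i H_j)` is block diagonal in the Hamming weight, and on the weight-`m` block it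
is the exponential of the Hermitian block `(H_j)_m`. Hence `det V_m = exp(-i t_m)` with
`t_m = ∑_j tr (H_j)_m` real, so `θ_m(V) ≡ -t_m (mod 2π)`, and it suffices to show that
`t_{n-1} - t_1 = (n-2)(t_n - t_0)`. This identity is linear in the diagonal of the Hamiltonians,
so it is enough to check it for a diagonal `φ` depending only on the bits in a set `S` with
`|S| ≤ 2`. Flipping a bit outside `S` does not change `φ`, which accounts for `(n - |S|)` copies of
`φ(1…1) - φ(0…0)`; the bits in `S` contribute `(|S| - 2)` more copies, by inspection of the cases
`|S| = 0, 1, 2`.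
-/

namespace Matrix

variable {ι κ α : Type*}

def IsBlockDiagonal [Zero α] (A : Matrix ι ι α) (w : ι → κ) : Prop :=
  ∀ i j, w i ≠ w j → A i j = 0

section CommRing

variable [CommRing α] {w : ι → κ} {A B : Matrix ι ι α}

theorem IsBlockDiagonal.smul (hA : A.IsBlockDiagonal w) (c : α) : (c • A).IsBlockDiagonal w :=
  fun i j hij => by rw [smul_apply, hA i j hij, smul_zero]

variable [Fintype ι]

theorem IsBlockDiagonal.mul (hA : A.IsBlockDiagonal w) (hB : B.IsBlockDiagonal w) :
    (A * B).IsBlockDiagonal w := by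
  intro i j hij
  rw [mul_apply]
  refine Finset.sum_eq_zero fun l _ => ?_
  by_cases hil : w i = w l
  · rw [hB l j (hil ▸ hij), mul_zero]
  · rw [hA i l hil, zero_mul]

theorem IsBlockDiagonal.toBlock_mul [DecidableEq κ] (hA : A.IsBlockDiagonal w)
    (B : Matrix ι ι α) (k : κ) :
    (A * B).toBlock (w · = k) (w · = k) = A.toBlock (w · = k) (w · = k) * B.toBlock _ _ := by
  have hoff : A.toBlock (w · = k) (fun i => ¬ w i = k) = 0 := by
    ext a b
    exact hA a b (a.2.trans_ne (Ne.symm b.2))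
  rw [toBlock_mul_eq_add _ (w · = k), hoff, Matrix.zero_mul, add_zero]

theorem IsBlockDiagonal.pow [DecidableEq ι] (hA : A.IsBlockDiagonal w) (m : ℕ) :
    (A ^ m).IsBlockDiagonal w := by
  induction m with
  | zero => exact fun i j hij => one_apply_ne fun h => hij (h ▸ rfl)
  | succ m ih => rw [pow_succ]; exact ih.mul hA

variable [DecidableEq ι] [DecidableEq κ]

theorem IsBlockDiagonal.toBlock_pow (hA : A.IsBlockDiagonal w) (k : κ) (m : ℕ) :
    (A ^ m).toBlock (w · = k) (w · = k) = A.toBlock (w · = k) (w · = k) ^ m := by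
  induction m with
  | zero => exact toBlock_one_self _
  | succ m ih => rw [pow_succ', hA.toBlock_mul, ih, pow_succ']

theorem toBlock_list_prod_of_isBlockDiagonal (L : List (Matrix ι ι α))
    (hL : ∀ A ∈ L, A.IsBlockDiagonal w) (k : κ) :
    L.prod.toBlock (w · = k) (w · = k) = (L.map (·.toBlock (w · = k) (w · = k))).prod := by
  induction L with
  | nil => exact toBlock_one_self _
  | cons A L ih =>
    rw [List.prod_cons, (hL A List.mem_cons_self).toBlock_mul,
      ih fun B hB => hL B (List.mem_cons_of_mem A hB), List.map_cons, List.prod_cons]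

end CommRing

section Exp

open Nat

variable {𝕂 : Type*} [RCLike 𝕂] [Fintype ι] [DecidableEq ι] {w : ι → κ} {A : Matrix ι ι 𝕂}

theorem exp_apply_eq_tsum (A : Matrix ι ι 𝕂) (i j : ι) :
    NormedSpace.exp A i j = ∑' m : ℕ, (m !⁻¹ : 𝕂) * (A ^ m) i j := by
  -- any norm on matrices makes the exponential series summable; take the operator norm
  open scoped Norms.Operator in
  have hsum := NormedSpace.exp_series_hasSum_exp' (𝕂 := 𝕂) A
  exact (Pi.hasSum.mp (Pi.hasSum.mp hsum i) j).tsum_eq.symm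

theorem IsBlockDiagonal.exp (hA : A.IsBlockDiagonal w) :
    (NormedSpace.exp A).IsBlockDiagonal w := by
  intro i j hij
  simp only [exp_apply_eq_tsum, hA.pow _ i j hij, mul_zero, tsum_zero]

theorem IsBlockDiagonal.toBlock_exp [DecidableEq κ] (hA : A.IsBlockDiagonal w) (k : κ) :
    (NormedSpace.exp A).toBlock (w · = k) (w · = k) =
      NormedSpace.exp (A.toBlock (w · = k) (w · = k)) := by
  ext a b
  simp only [toBlock_apply, exp_apply_eq_tsum, ← hA.toBlock_pow]

end Exp

theorem IsHermitian.det_exp_smul {n : Type*} [Fintype n] [DecidableEq n]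
    {B : Matrix n n ℂ} (hB : B.IsHermitian) (c : ℂ) :
    (NormedSpace.exp (c • B)).det = Complex.exp (c * B.trace) := by
  set U : (Matrix n n ℂ)ˣ := Unitary.toUnits hB.eigenvectorUnitary
  have hcB : c • B = U.1 * diagonal (c • (RCLike.ofReal ∘ hB.eigenvalues)) * U⁻¹.1 := by
    conv_lhs => rw [hB.spectral_theorem]
    simp [U, diagonal_smul, Unitary.conjStarAlgAut_apply]
  rw [hcB, Matrix.exp_units_conj, det_units_conj, exp_diagonal, det_diagonal,
    hB.trace_eq_sum_eigenvalues, mul_sum, Complex.exp_sum]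
  simp [Pi.coe_exp, Complex.exp_eq_exp_ℂ]

theorem IsHermitian.ofReal_re_trace {n : Type*} [Fintype n] {B : Matrix n n ℂ}
    (hB : B.IsHermitian) : (B.trace.re : ℂ) = B.trace :=
  Complex.conj_eq_iff_re.mp <| by rw [← Complex.star_def, ← trace_conjTranspose, hB.eq]

end Matrix

theorem mod2Pi_arg_exp_mul_I (x : ℝ) : Mod2Pi (Complex.arg (Complex.exp (x * Complex.I))) x :=
  Real.Angle.angle_eq_iff_two_pi_dvd_sub.mp <| by
    rw [Complex.arg_exp_mul_I, Real.Angle.coe_toIocMod]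

theorem mod2Pi_delta3 (n : ℕ) {θ x : ℕ → ℝ} (h : ∀ m, Mod2Pi (θ m) (x m)) :
    Mod2Pi (θ (n - 1) - θ 1 - ((n : ℝ) - 2) * (θ n - θ 0))
      (x (n - 1) - x 1 - ((n : ℝ) - 2) * (x n - x 0)) := by
  obtain ⟨a, ha⟩ := h (n - 1)
  obtain ⟨b, hb⟩ := h 1
  obtain ⟨c, hc⟩ := h n
  obtain ⟨d, hd⟩ := h 0
  refine ⟨a - b - ((n : ℤ) - 2) * (c - d), ?_⟩
  push_cast
  linear_combination ha - hb - ((n : ℝ) - 2) * (hc - hd)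

section HammingWeight

variable {n : ℕ}

theorem hw_not (z : Fin n → Bool) : hw (fun i => !z i) = n - hw z := by
  have h := card_filter_add_card_filter_not (s := univ) (fun i => z i = true)
  simp only [card_univ, Fintype.card_fin] at h
  simp only [hw, Bool.not_eq_true', ← Bool.not_eq_true]
  omega

theorem hw_eq_zero_iff {z : Fin n → Bool} : hw z = 0 ↔ z = fun _ => false := by
  simp [hw, funext_iff]

theorem hw_eq_one_iff {z : Fin n → Bool} : hw z = 1 ↔ ∃ i, z = fun k => decide (k = i) := by
  simp only [hw, card_eq_one, Finset.ext_iff, funext_iff, mem_filter, mem_univ, true_and,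
    mem_singleton]
  refine exists_congr fun i => forall_congr' fun k => ?_
  cases z k <;> simp

end HammingWeight

section WeightSum

variable {n : ℕ} {R : Type*}

def weightSum [AddCommMonoid R] (φ : (Fin n → Bool) → R) (m : ℕ) : R :=
  ∑ z with hw z = m, φ z

section AddCommMonoid

variable [AddCommMonoid R]

theorem weightSum_sum {α : Type*} (s : Finset α) (φ : α → (Fin n → Bool) → R) (m : ℕ) :
    weightSum (∑ a ∈ s, φ a) m = ∑ a ∈ s, weightSum (φ a) m := by
  simp only [weightSum, Finset.sum_apply]
  exact Finset.sum_comm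

theorem weightSum_sub (φ : (Fin n → Bool) → R) {m : ℕ} (hm : m ≤ n) :
    weightSum φ (n - m) = weightSum (fun z => φ (fun i => !z i)) m := by
  refine Finset.sum_nbij' (fun z i => !z i) (fun z i => !z i) ?_ ?_ ?_ ?_ ?_ <;>
    simp only [mem_filter, mem_univ, true_and, hw_not, Bool.not_not, implies_true]
  all_goals omega

theorem weightSum_zero (φ : (Fin n → Bool) → R) : weightSum φ 0 = φ (fun _ => false) := by
  have h : univ.filter (fun z : Fin n → Bool => hw z = 0) = {fun _ => false} := by
    ext z; simp [hw_eq_zero_iff]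
  rw [weightSum, h, sum_singleton]

theorem weightSum_self (φ : (Fin n → Bool) → R) : weightSum φ n = φ (fun _ => true) := by
  simpa using weightSum_sub φ (Nat.zero_le n) |>.trans (weightSum_zero _)

theorem weightSum_one (φ : (Fin n → Bool) → R) :
    weightSum φ 1 = ∑ i, φ (fun k => decide (k = i)) := by
  have h : univ.filter (fun z : Fin n → Bool => hw z = 1) =
      univ.image fun i k => decide (k = i) := by
    ext z; simp [hw_eq_one_iff, eq_comm]
  rw [weightSum, h, Finset.sum_image]
  intro i _ j _ hij
  simpa using congrFun hij i

theorem weightSum_sub_one (φ : (Fin n → Bool) → R) (hn : 1 ≤ n) :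
    weightSum φ (n - 1) = ∑ i, φ (fun k => !decide (k = i)) := by
  rw [weightSum_sub φ hn, weightSum_one]

end AddCommMonoid

variable [CommRing R]

theorem sum_sub_of_dependsOn_of_card_le_two {S : Finset (Fin n)} (hS : #S ≤ 2)
    {φ : (Fin n → Bool) → R} (hφ : DependsOn φ (S : Set (Fin n))) :
    ∑ i ∈ S, (φ (fun k => !decide (k = i)) - φ (fun k => decide (k = i))) =
      ((#S : R) - 2) * (φ (fun _ => true) - φ (fun _ => false)) := by
  interval_cases h : #S
  · obtain rfl := card_eq_zero.mp h
    have : φ (fun _ => true) = φ (fun _ => false) := hφ (by simp)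
    simp [this]
  · obtain ⟨a, rfl⟩ := card_eq_one.mp h
    have h₀ : φ (fun k => !decide (k = a)) = φ (fun _ => false) := hφ (by simp)
    have h₁ : φ (fun k => decide (k = a)) = φ (fun _ => true) := hφ (by simp)
    rw [sum_singleton, h₀, h₁]
    ring
  · obtain ⟨a, b, hab, rfl⟩ := card_eq_two.mp h
    have ha : φ (fun k => !decide (k = a)) = φ (fun k => decide (k = b)) :=
      hφ (by simp [hab, Ne.symm hab])
    have hb : φ (fun k => !decide (k = b)) = φ (fun k => decide (k = a)) :=
      hφ (by simp [hab, Ne.symm hab])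
    rw [sum_pair hab, ha, hb]
    ring

theorem weightSum_sub_one_sub_weightSum_one {S : Finset (Fin n)} (hS : #S ≤ 2)
    {φ : (Fin n → Bool) → R} (hφ : DependsOn φ (S : Set (Fin n))) (hn : 1 ≤ n) :
    weightSum φ (n - 1) - weightSum φ 1 = ((n : R) - 2) * (weightSum φ n - weightSum φ 0) := by
  have hout : ∀ i ∈ Sᶜ, φ (fun k => !decide (k = i)) - φ (fun k => decide (k = i)) =
      φ (fun _ => true) - φ (fun _ => false) := by
    intro i hi
    have hne : ∀ k ∈ (S : Set (Fin n)), k ≠ i :=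
      fun k hk => ne_of_mem_of_not_mem hk (mem_compl.mp hi)
    have h₁ : φ (fun k => !decide (k = i)) = φ (fun _ => true) :=
      hφ fun k hk => by simp [hne k hk]
    have h₀ : φ (fun k => decide (k = i)) = φ (fun _ => false) :=
      hφ fun k hk => by simp [hne k hk]
    rw [h₁, h₀]
  rw [weightSum_sub_one φ hn, weightSum_one, weightSum_self, weightSum_zero, ← sum_sub_distrib,
    ← sum_add_sum_compl S, sum_sub_of_dependsOn_of_card_le_two hS hφ, sum_congr rfl hout,
    sum_const, card_compl, Fintype.card_fin, nsmul_eq_mul,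
    Nat.cast_sub (by simpa using card_le_univ S)]
  ring

end WeightSum

section Hamiltonians

variable {n : ℕ}

theorem U1Invariant.isBlockDiagonal {M : Matrix (Fin n → Bool) (Fin n → Bool) ℂ}
    (hM : U1Invariant M) : M.IsBlockDiagonal hw :=
  hM

theorem block_eq_toBlock (M : Matrix (Fin n → Bool) (Fin n → Bool) ℂ) (m : ℕ) :
    block M m = M.toBlock (hw · = m) (hw · = m) :=
  rfl

theorem trace_block (M : Matrix (Fin n → Bool) (Fin n → Bool) ℂ) (m : ℕ) :
    (block M m).trace = weightSum (fun z => M z z) m :=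
  (Finset.sum_subtype _ (by simp) (fun z => M z z)).symm

theorem SupportedOn.dependsOn_diag {S : Finset (Fin n)}
    {M : Matrix (Fin n → Bool) (Fin n → Bool) ℂ} (hM : SupportedOn S M) :
    DependsOn (fun z => M z z) (S : Set (Fin n)) := by
  obtain ⟨f, hf⟩ := hM
  intro z z' h
  have hres : (fun i : {i // i ∈ S} => z i.1) = fun i => z' i.1 := funext fun i => h i.1 i.2
  simp only [hf, hres]

theorem KLocal.weightSum_diag (hn : 1 ≤ n) {M : Matrix (Fin n → Bool) (Fin n → Bool) ℂ}
    (hM : KLocal 2 M) :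
    weightSum (fun z => M z z) (n - 1) - weightSum (fun z => M z z) 1 =
      ((n : ℂ) - 2) * (weightSum (fun z => M z z) n - weightSum (fun z => M z z) 0) := by
  obtain ⟨q, g, S, hg, rfl⟩ := hM
  have hdiag : (fun z => (∑ i, g i) z z) = ∑ i, fun z => g i z z := by
    ext z; simp [Matrix.sum_apply]
  simp only [hdiag, weightSum_sum, ← sum_sub_distrib, mul_sum]
  exact sum_congr rfl fun i _ =>
    weightSum_sub_one_sub_weightSum_one (hg i).1 (hg i).2.dependsOn_diag hn

theorem det_block_list_prod_exp {p : ℕ} {H : Fin p → Matrix (Fin n → Bool) (Fin n → Bool) ℂ}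
    (hherm : ∀ j, (H j).IsHermitian) (hU1 : ∀ j, U1Invariant (H j)) (m : ℕ) :
    (block (List.ofFn fun j => NormedSpace.exp ((-Complex.I) • H j)).prod m).det =
      Complex.exp (-Complex.I * ∑ j, (block (H j) m).trace) := by
  have hexp : ∀ j, (NormedSpace.exp ((-Complex.I) • H j)).IsBlockDiagonal hw :=
    fun j => ((hU1 j).isBlockDiagonal.smul _).exp
  have hprod := toBlock_list_prod_of_isBlockDiagonal _
    (fun A hA => by obtain ⟨j, rfl⟩ := List.mem_ofFn.mp hA; exact hexp j) m
  rw [block_eq_toBlock, hprod, ← coe_detMonoidHom, map_list_prod, List.map_map, List.map_ofFn,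
    List.prod_ofFn, mul_sum, Complex.exp_sum]
  refine prod_congr rfl fun j _ => ?_
  simp only [Function.comp_apply, coe_detMonoidHom, ((hU1 j).isBlockDiagonal.smul _).toBlock_exp]
  exact ((hherm j).submatrix _).det_exp_smul _

theorem theta_list_prod_exp {p : ℕ} {H : Fin p → Matrix (Fin n → Bool) (Fin n → Bool) ℂ}
    (hherm : ∀ j, (H j).IsHermitian) (hU1 : ∀ j, U1Invariant (H j)) (m : ℕ) :
    Mod2Pi (theta (List.ofFn fun j => NormedSpace.exp ((-Complex.I) • H j)).prod m)
      (-(∑ j, (block (H j) m).trace).re) := by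
  have hreal : ((∑ j, (block (H j) m).trace).re : ℂ) = ∑ j, (block (H j) m).trace := by
    rw [Complex.re_sum, Complex.ofReal_sum]
    exact sum_congr rfl fun j _ => ((hherm j).submatrix _).ofReal_re_trace
  rw [theta, det_block_list_prod_exp hherm hU1]
  convert mod2Pi_arg_exp_mul_I (-(∑ j, (block (H j) m).trace).re) using 3
  rw [Complex.ofReal_neg, hreal]
  ring

end Hamiltonians

/-- for `V` a product of exponentials of Hermitian U(1)-invariant
2-local Hamiltonians, `Δ3(V) ≡ 0 (mod 2π)`. -/
theorem stmt18 (n : ℕ) (hn : 2 ≤ n) (p : ℕ)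
    (H : Fin p → Matrix (Fin n → Bool) (Fin n → Bool) ℂ)
    (hherm : ∀ j, (H j).IsHermitian) (hU1 : ∀ j, U1Invariant (H j))
    (h2loc : ∀ j, KLocal 2 (H j))
    (V : Matrix (Fin n → Bool) (Fin n → Bool) ℂ)
    (hV : V = (List.ofFn fun j => NormedSpace.exp ((-Complex.I) • H j)).prod) :
    Mod2Pi (Delta3 V) 0 := by
  subst hV
  set t : ℕ → ℂ := fun m => ∑ j, (block (H j) m).trace
  have ht : t (n - 1) - t 1 = ((n : ℂ) - 2) * (t n - t 0) := by
    simp only [t, trace_block, ← sum_sub_distrib, mul_sum]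
    exact sum_congr rfl fun j _ => (h2loc j).weightSum_diag (by omega)
  rw [Delta3]
  convert mod2Pi_delta3 n (theta_list_prod_exp hherm hU1) using 1
  have hre := congrArg Complex.re ht
  simp only [Complex.sub_re, Complex.mul_re, Complex.natCast_re, Complex.re_ofNat, Complex.sub_im,
    Complex.natCast_im, Complex.im_ofNat, sub_self, zero_mul, sub_zero] at hre
  linarith
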